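/- (Theorem 4.2, two-stage case, algebraic form) Let s = 2 and suppose c_1 = c_2. Suppose P is an invertible real n×n matrix with P·K·P^{−1} = −K, and F_1, F_2 are real n×n matrices with P·F_i·P^{−1} = −F_i for i = 1,2. Then det(exp(h·K)) = 1 and for every real 2×2 matrix A the VP condition holds: det(I_{2n} − h·M(A;F)) = det(exp(h·K))·det(I_{2n} + h·M(Aᵀ;F)). -/

import Mathlib

/-!
Since `c` is constant, `M(A;F)` is the block matrix with blocks `a_ij • F_j`. Conjugation by
`diag(P, P)` negates every `F_j`, so `det(1 - h M(A)) = det(1 + h M(A))`. For two stages,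
conjugation by `diag(t, 1)` moves a factor `t` from one off-diagonal block to the other, so the
determinant only sees the product `a₁₂ a₂₁`, which is invariant under transposition.
Similarly `P` conjugates `exp(hK)` to its inverse, so `det exp(hK) = ±1`, and it is positive
because `exp(hK) = exp(hK/2)²`.
-/

open Matrix

/-- The block matrix `M(A;F)` whose `(i,j)` block is `a_{ij}·exp((c_i−c_j)·h·K)·F_j`. -/
noncomputable def Mblk {n s : ℕ} (h : ℝ) (K : Matrix (Fin n) (Fin n) ℝ) (c : Fin s → ℝ)
    (A : Matrix (Fin s) (Fin s) ℝ) (F : Fin s → Matrix (Fin n) (Fin n) ℝ) :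
    Matrix (Fin s × Fin n) (Fin s × Fin n) ℝ :=
  fun p q => A p.1 q.1 * (NormedSpace.exp (((c p.1 - c q.1) * h) • K) * F q.1) p.2 q.2

open scoped Kronecker

namespace Matrix

variable {ι m R : Type*}

theorem det_exp_nonneg [Fintype m] [DecidableEq m] (X : Matrix m m ℝ) :
    0 ≤ (NormedSpace.exp X).det := by
  have hX : X = 2 • ((1 / 2 : ℝ) • X) := by rw [two_nsmul, ← add_smul]; norm_num
  rw [hX, exp_nsmul, det_pow]
  exact even_two.pow_nonneg _

theorem det_exp_eq_one_of_conj_eq_neg [Fintype m] [DecidableEq m] {P X : Matrix m m ℝ}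
    (hP : IsUnit P) (hX : P * X * P⁻¹ = -X) : (NormedSpace.exp X).det = 1 := by
  have h_sq : (NormedSpace.exp X).det * (NormedSpace.exp X).det = 1 :=
    calc _ = (NormedSpace.exp X).det * (NormedSpace.exp (-X)).det := by
          rw [← hX, exp_conj _ _ hP, det_conj hP]
      _ = 1 := by
          rw [← det_mul, ← exp_add_of_commute _ _ (Commute.neg_right (Commute.refl X)),
            add_neg_cancel, NormedSpace.exp_zero, det_one]
  exact (mul_self_eq_one_iff.mp h_sq).resolve_right (by linarith [det_exp_nonneg X])

theorem det_one_sub_eq_det_one_add_of_conj_eq_neg [Fintype m] [DecidableEq m] [CommRing R]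
    {Q X : Matrix m m R} (hQ : IsUnit Q) (hX : Q * X * Q⁻¹ = -X) : (1 - X).det = (1 + X).det := by
  have h_conj : Q * (1 - X) * Q⁻¹ = 1 + X := by
    rw [mul_sub, sub_mul, mul_one, mul_nonsing_inv _ ((isUnit_iff_isUnit_det Q).mp hQ), hX,
      sub_neg_eq_add]
  rw [← h_conj, det_conj hQ]

theorem det_fromBlocks_smul₁₂_eq_smul₂₁ [Fintype m] [DecidableEq m] {n : Type*} [Fintype n]
    [DecidableEq n] [Field R]
    (A : Matrix m m R) (B : Matrix m n R) (C : Matrix n m R) (D : Matrix n n R) (t : R) :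
    (fromBlocks A (t • B) C D).det = (fromBlocks A B (t • C) D).det := by
  rcases eq_or_ne t 0 with rfl | ht
  · simp [det_fromBlocks_zero₁₂, det_fromBlocks_zero₂₁]
  set S : Matrix (m ⊕ n) (m ⊕ n) R := fromBlocks (t • 1) 0 0 1
  have hS : S.det ≠ 0 := by simp [S, ht]
  have h_intertwine : S * fromBlocks A B (t • C) D = fromBlocks A (t • B) C D * S := by
    simp [S, fromBlocks_multiply]
  refine mul_left_cancel₀ hS ?_
  rw [mul_comm, ← det_mul, ← h_intertwine, det_mul]

theorem det_fromBlocks_smul₁₂_smul₂₁_comm [Fintype m] [DecidableEq m] {n : Type*} [Fintype n]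
    [DecidableEq n] [Field R]
    (A : Matrix m m R) (B : Matrix m n R) (C : Matrix n m R) (D : Matrix n n R) (β γ : R) :
    (fromBlocks A (β • B) (γ • C) D).det = (fromBlocks A (γ • B) (β • C) D).det := by
  rw [det_fromBlocks_smul₁₂_eq_smul₂₁, det_fromBlocks_smul₁₂_eq_smul₂₁, smul_smul,
    smul_smul, mul_comm]

def smulBlocks [Mul R] (A : Matrix ι ι R) (F : ι → Matrix m m R) : Matrix (ι × m) (ι × m) R :=
  of fun p q => A p.1 q.1 * F q.1 p.2 q.2

theorem smulBlocks_smul [Semigroup R] (r : R) (A : Matrix ι ι R) (F : ι → Matrix m m R) :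
    smulBlocks (r • A) F = r • smulBlocks A F := by
  ext p q
  simp [smulBlocks, mul_assoc]

theorem smulBlocks_neg [Mul R] [HasDistribNeg R] (A : Matrix ι ι R) (F : ι → Matrix m m R) :
    smulBlocks A (fun i => -F i) = -smulBlocks A F := by
  ext p q
  simp [smulBlocks]

theorem kronecker_one_mul_smulBlocks [Fintype ι] [DecidableEq ι] [Fintype m] [CommSemiring R]
    (P : Matrix m m R) (A : Matrix ι ι R) (F : ι → Matrix m m R) :
    (1 ⊗ₖ P) * smulBlocks A F = smulBlocks A (fun i => P * F i) := by
  ext ⟨i, a⟩ ⟨j, b⟩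
  simp [smulBlocks, mul_apply, one_apply, Fintype.sum_prod_type, Finset.mul_sum, mul_left_comm]

theorem smulBlocks_mul_kronecker_one [Fintype ι] [DecidableEq ι] [Fintype m] [CommSemiring R]
    (P : Matrix m m R) (A : Matrix ι ι R) (F : ι → Matrix m m R) :
    smulBlocks A F * (1 ⊗ₖ P) = smulBlocks A (fun i => F i * P) := by
  ext ⟨i, a⟩ ⟨j, b⟩
  simp [smulBlocks, mul_apply, one_apply, Fintype.sum_prod_type, Finset.mul_sum, mul_assoc]

theorem det_one_sub_smulBlocks [Fintype ι] [DecidableEq ι] [Fintype m] [DecidableEq m] [CommRing R]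
    {P : Matrix m m R} (hP : IsUnit P) (A : Matrix ι ι R) {F : ι → Matrix m m R}
    (hF : ∀ i, P * F i * P⁻¹ = -F i) :
    (1 - smulBlocks A F).det = (1 + smulBlocks A F).det := by
  refine det_one_sub_eq_det_one_add_of_conj_eq_neg (IsUnit.kronecker isUnit_one hP) ?_
  rw [inv_kronecker, inv_one, kronecker_one_mul_smulBlocks, smulBlocks_mul_kronecker_one,
    funext hF, smulBlocks_neg]

def finTwoProdEquivSum (m : Type*) : Fin 2 × m ≃ m ⊕ m :=
  (Equiv.prodCongr finTwoEquiv (Equiv.refl m)).trans (Equiv.boolProdEquivSum m)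

theorem reindex_one_add_smulBlocks [DecidableEq m] [CommRing R] (A : Matrix (Fin 2) (Fin 2) R)
    (F : Fin 2 → Matrix m m R) :
    reindex (finTwoProdEquivSum m) (finTwoProdEquivSum m) (1 + smulBlocks A F) =
      fromBlocks (1 + A 0 0 • F 0) (A 0 1 • F 1) (A 1 0 • F 0) (1 + A 1 1 • F 1) := by
  ext (a | a) (b | b) <;> simp [finTwoProdEquivSum, smulBlocks, one_apply, finTwoEquiv]

theorem det_one_add_smulBlocks_transpose [Fintype m] [DecidableEq m] [Field R]
    (A : Matrix (Fin 2) (Fin 2) R) (F : Fin 2 → Matrix m m R) :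
    (1 + smulBlocks Aᵀ F).det = (1 + smulBlocks A F).det := by
  rw [← det_reindex_self (finTwoProdEquivSum m),
    ← det_reindex_self (finTwoProdEquivSum m) (1 + smulBlocks A F), reindex_one_add_smulBlocks,
    reindex_one_add_smulBlocks]
  exact det_fromBlocks_smul₁₂_smul₂₁_comm _ _ _ _ _ _

end Matrix

theorem Mblk_eq_smulBlocks {n s : ℕ} (h : ℝ) (K : Matrix (Fin n) (Fin n) ℝ) {c : Fin s → ℝ}
    (hc : ∀ i j, c i = c j) (A : Matrix (Fin s) (Fin s) ℝ)
    (F : Fin s → Matrix (Fin n) (Fin n) ℝ) :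
    Mblk h K c A F = smulBlocks A F := by
  ext p q
  simp [Mblk, smulBlocks, hc p.1 q.1]

theorem stmt_9 (n : ℕ) (h : ℝ) (K : Matrix (Fin n) (Fin n) ℝ) (c : Fin 2 → ℝ)
    (hc : c 0 = c 1)
    (P : Matrix (Fin n) (Fin n) ℝ) (hP : IsUnit P)
    (hK : P * K * P⁻¹ = -K)
    (F : Fin 2 → Matrix (Fin n) (Fin n) ℝ)
    (hF : ∀ i, P * F i * P⁻¹ = -(F i)) :
    (NormedSpace.exp (h • K)).det = 1 ∧
      ∀ A : Matrix (Fin 2) (Fin 2) ℝ,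
        ((1 : Matrix (Fin 2 × Fin n) (Fin 2 × Fin n) ℝ) - h • Mblk h K c A F).det =
          (NormedSpace.exp (h • K)).det *
            ((1 : Matrix (Fin 2 × Fin n) (Fin 2 × Fin n) ℝ) + h • Mblk h K c Aᵀ F).det := by
  have h_det_exp : (NormedSpace.exp (h • K)).det = 1 :=
    det_exp_eq_one_of_conj_eq_neg hP (by rw [Matrix.mul_smul, Matrix.smul_mul, hK, smul_neg])
  have hc' : ∀ i j, c i = c j := by
    intro i j
    fin_cases i <;> fin_cases j <;> simp [hc]
  refine ⟨h_det_exp, fun A => ?_⟩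
  rw [h_det_exp, one_mul, Mblk_eq_smulBlocks h K hc', Mblk_eq_smulBlocks h K hc',
    ← smulBlocks_smul, ← smulBlocks_smul, det_one_sub_smulBlocks hP _ hF, ← transpose_smul,
    det_one_add_smulBlocks_transpose]
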